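/- Assume (EA). If u ∈ T^n satisfies P(u) = 0, then u ∈ I_R; likewise, if 𝒫_qsym(u) = 0, then u ∈ I_R. Combined with 𝒫_qsym(I_R) = 0, the kernel of 𝒫_qsym restricted to T^n is exactly I_R ∩ T^n. -/

import Mathlib

/- Setting (common to all statements):
`V` is the complex vector space with basis `X_1, …, X_N`, `T = T(V)` the tensor algebra,
realized concretely as the algebra of the free monoid of words in the letters `Fin N`;
the homogeneous component `T^n` is the span of the words of length `n`.
For `j < i` we are given nonzero scalars `b i j` and elements `p i j` in the span of the
`X_k ⊗ X_l` with `k, l ≤ i - 1`; `I_R` is the two-sided ideal generated by the elements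
`X_i ⊗ X_j − b_{ij} X_j ⊗ X_i − p_{ij}`, and `𝒜 = T/I_R`. -/

open scoped BigOperators

noncomputable section

namespace QDiff

/-- Words in the letters `X_1, …, X_N` (indexed by `Fin N`). -/
abbrev Word (N : ℕ) := FreeMonoid (Fin N)

/-- The tensor algebra `T(V)` over the `N`-dimensional space `V` with basis `X_1,…,X_N`,
realized concretely as the monoid algebra on words. -/
abbrev T (N : ℕ) := MonoidAlgebra ℂ (Word N)

variable {N : ℕ}

/-- The basis vector `X_i` of `V ⊆ T(V)`. -/
def X (i : Fin N) : T N := MonoidAlgebra.single (FreeMonoid.of i) 1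

/-- The monomial of `T(V)` associated to a word. -/
def mono (w : Word N) : T N := MonoidAlgebra.single w 1

/-- Length (tensor degree) of a word. -/
def wlen (w : Word N) : ℕ := (FreeMonoid.toList w).length

/-- `cnt w k`: the number of occurrences of the letter `X_k` in the word `w`;
so `fun k => cnt w k` is `ℓ(w)`. -/
def cnt (w : Word N) (k : Fin N) : ℕ := (FreeMonoid.toList w).count k

/-- `w' <_l w`: at the smallest index at which `ℓ(w')` and `ℓ(w)` differ,
the entry of `ℓ(w')` is strictly greater than that of `ℓ(w)`. -/
def lexLt (w' w : Word N) : Prop :=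
  ∃ k : Fin N, (∀ j : Fin N, j < k → cnt w' j = cnt w j) ∧ cnt w k < cnt w' k

/-- `w' ≤_l w`. -/
def lexLe (w' w : Word N) : Prop := (∀ k : Fin N, cnt w' k = cnt w k) ∨ lexLt w' w

/-- The homogeneous component `T^n` of the tensor algebra. -/
def Tdeg (N n : ℕ) : Submodule ℂ (T N) :=
  Submodule.span ℂ {x : T N | ∃ w : Word N, wlen w = n ∧ x = mono w}

variable (b : Fin N → Fin N → ℂ) (p : Fin N → Fin N → T N)

/-- The scalars `b i j` (for `j < i`) are nonzero. -/
def GoodB : Prop := ∀ i j : Fin N, j < i → b i j ≠ 0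

/-- Each `p i j` (for `j < i`) lies in the span of the monomials `X_k ⊗ X_l`
with `k, l ≤ i - 1`. -/
def GoodP : Prop := ∀ i j : Fin N, j < i →
  p i j ∈ Submodule.span ℂ {x : T N | ∃ k l : Fin N, k < i ∧ l < i ∧ x = X k * X l}

/-- The generator `X_i ⊗ X_j − b_{ij} X_j ⊗ X_i − p_{ij}` of the ideal of relations. -/
def relGen (i j : Fin N) : T N := X i * X j - b i j • (X j * X i) - p i j

/-- The two-sided ideal `I_R` of relations (as a `ℂ`-submodule it is the span of the
elements `a ⬝ relGen i j ⬝ c`). -/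
def IR : Submodule ℂ (T N) :=
  Submodule.span ℂ
    {x : T N | ∃ (i j : Fin N) (a c : T N), j < i ∧ x = a * relGen b p i j * c}

/-- Condition (EA): every `u ∈ I_R` lies in the span of the elements
`a ⊗ (X_i ⊗ X_j − b_{ij} X_j ⊗ X_i − p_{ij}) ⊗ c`, where `j < i` and `a, c` are monomials
of `T` such that the monomial `a ⊗ X_i ⊗ X_j ⊗ c` is `≤_l` every monomial occurring in `u`. -/
def EA : Prop :=
  ∀ u ∈ IR b p, u ∈ Submodule.span ℂ
    {x : T N | ∃ (i j : Fin N) (a c : Word N), j < i ∧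
      x = mono a * relGen b p i j * mono c ∧
      ∀ w ∈ (MonoidAlgebra.coeff u : Word N →₀ ℂ).support,
        lexLe (a * (FreeMonoid.of i * FreeMonoid.of j) * c) w}

/-- The map `S : V ⊗ V → V ⊗ V` on pairs of basis vectors. -/
def Sact (x y : Fin N) : T N :=
  if y < x then b x y • (X y * X x) + p x y
  else if x < y then (b y x)⁻¹ • (X y * X x - p y x)
  else X x * X y

/-- The map `S̄ : V ⊗ V → V ⊗ V` on pairs of basis vectors. -/
def SbarAct (x y : Fin N) : T N :=
  if y < x then b x y • (X y * X x)
  else if x < y then (b y x)⁻¹ • (X y * X x)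
  else X x * X y

/-- Extend a function on words to a linear endomorphism of `T(V)`. -/
def liftWord (f : Word N → T N) : T N →ₗ[ℂ] T N :=
  (Finsupp.lsum ℂ (fun w => LinearMap.toSpanSingleton ℂ (T N) (f w))).comp
    (MonoidAlgebra.coeffLinearEquiv ℂ : T N ≃ₗ[ℂ] (Word N →₀ ℂ)).toLinearMap

/-- The action of the paper's `σ_{k+1}` (acting on the tensor factors in 0-indexed
positions `k, k+1`) on a word; identity on words that are too short. -/
def sigmaWord (k : ℕ) (w : Word N) : T N :=
  if h : k + 2 ≤ (FreeMonoid.toList w).length then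
    mono (FreeMonoid.ofList ((FreeMonoid.toList w).take k)) *
      Sact b p ((FreeMonoid.toList w).get ⟨k, by omega⟩)
        ((FreeMonoid.toList w).get ⟨k + 1, by omega⟩) *
      mono (FreeMonoid.ofList ((FreeMonoid.toList w).drop (k + 2)))
  else mono w

/-- The paper's operator `σ_{k+1}`: it acts as `S` on the tensor factors in 0-indexed
positions `k, k+1` and as the identity on all other factors. -/
def sigma (k : ℕ) : T N →ₗ[ℂ] T N := liftWord (sigmaWord b p k)

/-- The action of the paper's `σ̄_{k+1}` on a word. -/
def sigmabarWord (k : ℕ) (w : Word N) : T N :=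
  if h : k + 2 ≤ (FreeMonoid.toList w).length then
    mono (FreeMonoid.ofList ((FreeMonoid.toList w).take k)) *
      SbarAct b ((FreeMonoid.toList w).get ⟨k, by omega⟩)
        ((FreeMonoid.toList w).get ⟨k + 1, by omega⟩) *
      mono (FreeMonoid.ofList ((FreeMonoid.toList w).drop (k + 2)))
  else mono w

/-- The paper's operator `σ̄_{k+1}`: it acts as `S̄` on the tensor factors in 0-indexed
positions `k, k+1` and as the identity on all other factors. -/
def sigmabar (k : ℕ) : T N →ₗ[ℂ] T N := liftWord (sigmabarWord b k)

/-- The scalar by which `S̄` twists the (ordered) pair `(x, y)`. -/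
def betaC (x y : Fin N) : ℂ := if y < x then b x y else if x < y then (b y x)⁻¹ else 1

/-- The coefficient of the quasi-permutation action of `σ ∈ S_n` on the word
`X_{f 0} ⊗ ⋯ ⊗ X_{f (n-1)}`: the product of `β` over the inversions of `σ`. -/
def permCoeff {n : ℕ} (σ : Equiv.Perm (Fin n)) (f : Fin n → Fin N) : ℂ :=
  ∏ q ∈ Finset.univ.filter (fun q : Fin n × Fin n => q.1 < q.2 ∧ σ q.2 < σ q.1),
    betaC b (f q.1) (f q.2)

/-- The quasi-permutation action of `σ ∈ S_n` on a word
(identity on words of length `≠ n`). -/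
def permWordFun {n : ℕ} (σ : Equiv.Perm (Fin n)) (w : Word N) : T N :=
  if h : (FreeMonoid.toList w).length = n then
    permCoeff b σ (fun j => (FreeMonoid.toList w).get (Fin.cast h.symm j)) •
      mono (FreeMonoid.ofList
        (List.ofFn fun j => (FreeMonoid.toList w).get (Fin.cast h.symm (σ⁻¹ j))))
  else mono w

/-- The operator `σ̄` on `T^n` for an arbitrary permutation `σ ∈ S_n`
(the quasi-permutation representation). -/
def sigmabarPerm {n : ℕ} (σ : Equiv.Perm (Fin n)) : T N →ₗ[ℂ] T N :=
  liftWord (permWordFun b σ)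

/-- The quasi-symmetrization operator `P_quasisym = (1/n!) ∑_{σ ∈ S_n} σ̄` on `T^n`. -/
def Pquasisym (n : ℕ) : T N →ₗ[ℂ] T N :=
  (n.factorial : ℂ)⁻¹ • ∑ σ : Equiv.Perm (Fin n), sigmabarPerm b σ

/-- The adjacent transposition `s_{k+1} = (k, k+1)` (0-indexed) in `S_n`. -/
def swapAdj (n : ℕ) (k : {k : ℕ // k + 2 ≤ n}) : Equiv.Perm (Fin n) :=
  Equiv.swap ⟨k.1, by omega⟩ ⟨k.1 + 1, by omega⟩

/-- A choice, for each `σ ∈ S_n`, of a list of adjacent transpositions. -/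
def DecompChoice (n : ℕ) := Equiv.Perm (Fin n) → List {k : ℕ // k + 2 ≤ n}

/-- The chosen lists really are decompositions: `σ = s_{i_1} ⋯ s_{i_r}`. -/
def ValidDecomp {n : ℕ} (D : DecompChoice n) : Prop :=
  ∀ σ : Equiv.Perm (Fin n), ((D σ).map (swapAdj n)).prod = σ

/-- `σ̂ = σ_{i_1} ⋯ σ_{i_r}` for the chosen decomposition `σ = s_{i_1} ⋯ s_{i_r}`. -/
def Phat {n : ℕ} (D : DecompChoice n) (σ : Equiv.Perm (Fin n)) : Module.End ℂ (T N) :=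
  ((D σ).map (fun k => (sigma b p k.1 : Module.End ℂ (T N)))).prod

/-- `P = (1/n!) ∑_{σ ∈ S_n} σ̂` (depending on the chosen decompositions `D`). -/
def POp {n : ℕ} (D : DecompChoice n) : Module.End ℂ (T N) :=
  (n.factorial : ℂ)⁻¹ • ∑ σ : Equiv.Perm (Fin n), Phat b p D σ

/-- `Q` is the operator `𝒫_qsym = lim_{M → ∞} P^M`: on each `T^n` and for every choice
of decompositions, the sequence `P^M u` is eventually equal to `Q u`. -/
def IsPqsym (Q : T N →ₗ[ℂ] T N) : Prop :=
  ∀ (n : ℕ) (D : DecompChoice n), ValidDecomp D →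
    ∀ u ∈ Tdeg N n, ∃ N₀ : ℕ, ∀ M ≥ N₀, ((POp b p D) ^ M) u = Q u

/-- The operator `I_r ⊗ Q^k ⊗ I_s` on `T^{r+k+s}`: on a word, apply `Q` to the middle
`k` tensor factors and the identity to the outer factors. -/
def middleMap (Q : T N →ₗ[ℂ] T N) (r k : ℕ) : T N →ₗ[ℂ] T N :=
  liftWord (fun w =>
    mono (FreeMonoid.ofList ((FreeMonoid.toList w).take r)) *
      Q (mono (FreeMonoid.ofList (((FreeMonoid.toList w).drop r).take k))) *
      mono (FreeMonoid.ofList ((FreeMonoid.toList w).drop (r + k))))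

/-- The pairing between `T(V^*)` (realized via the dual basis, hence again as the span
of words) and `T(V)`: a dual-basis word pairs to `1` with the corresponding word of the
same degree, and to `0` with all other words. -/
def pairT (w z : T N) : ℂ :=
  Finsupp.sum (MonoidAlgebra.coeff w : Word N →₀ ℂ) (fun a c => c * (MonoidAlgebra.coeff z : Word N →₀ ℂ) a)

/-- The quotient relation defining the quadratic algebra `𝒜 = T/I_R = RingQuot (Rel b p)`. -/
inductive Rel (b : Fin N → Fin N → ℂ) (p : Fin N → Fin N → T N) : T N → T N → Prop
  | mk (i j : Fin N) (h : j < i) : Rel b p (X i * X j) (b i j • (X j * X i) + p i j)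

/-- The ordered monomial `X_1^{a_1} ⊗ X_2^{a_2} ⊗ ⋯ ⊗ X_N^{a_N}`. -/
def ordMono (a : Fin N → ℕ) : T N := ((List.finRange N).map (fun i => X i ^ a i)).prod

/-! Each `σ_k` replaces a factor `X_x X_y` of a monomial by `S(X_x X_y)`, and
`X_x X_y - S(X_x X_y)` is a scalar multiple of a generator of `I_R` (for `x < y` the scalar is
`-b_{yx}⁻¹`). So `σ_k`, every `σ̂`, their average `P` and all powers of `P` induce the identity
on `T / I_R`: `u - P^M u ∈ I_R`, which gives `P u = 0 → u ∈ I_R` and `𝒫_qsym u = 0 → u ∈ I_R`.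

Conversely `𝒫_qsym ∘ P = 𝒫_qsym` on `T^n`, and appending `s_k` to every chosen decomposition
(reindexing `σ ↦ σ s_k`) turns `P` into `P ∘ σ_k`; hence `𝒫_qsym ∘ σ_k = 𝒫_qsym`, and
`𝒫_qsym` kills `a ⬝ relGen i j ⬝ c = w - σ_{|a|} w`, where `w = a X_i X_j c`. -/

section IdMod

variable {R M : Type*} [Ring R] [AddCommGroup M] [Module R M]

def idModSubmonoid (I : Submodule R M) : Submonoid (Module.End R M) where
  carrier := {f | ∀ v, v - f v ∈ I}
  mul_mem' {f g} hf hg v := by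
    simpa only [Module.End.mul_apply, sub_add_sub_cancel] using add_mem (hg v) (hf (g v))
  one_mem' v := by simp

lemma inv_card_smul_sum_mem_idModSubmonoid {K : Type*} [Field K] [CharZero K] [Module K M]
    {I : Submodule K M} {ι : Type*} [Fintype ι] [Nonempty ι] {f : ι → Module.End K M}
    (hf : ∀ i, f i ∈ idModSubmonoid I) :
    (Fintype.card ι : K)⁻¹ • ∑ i, f i ∈ idModSubmonoid I := by
  intro v
  have hcard : (Fintype.card ι : K) ≠ 0 := Nat.cast_ne_zero.mpr Fintype.card_ne_zero
  have hsub : v - ((Fintype.card ι : K)⁻¹ • ∑ i, f i) v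
      = (Fintype.card ι : K)⁻¹ • ∑ i, (v - f i v) := by
    rw [LinearMap.smul_apply, LinearMap.sum_apply, Finset.sum_sub_distrib, smul_sub,
      Finset.sum_const, Finset.card_univ, ← Nat.cast_smul_eq_nsmul K, inv_smul_smul₀ hcard]
  rw [hsub]
  exact I.smul_mem _ (I.sum_mem fun i _ => hf i v)

end IdMod

section Monomials

lemma wlen_mul (u v : Word N) : wlen (u * v) = wlen u + wlen v := by
  simp [wlen]

lemma wlen_of (i : Fin N) : wlen (FreeMonoid.of i) = 1 := rfl

lemma exists_eq_mul_of_add_two_le_wlen {w : Word N} {k : ℕ} (h : k + 2 ≤ wlen w) :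
    ∃ (a c : Word N) (x y : Fin N),
      wlen a = k ∧ w = a * (FreeMonoid.of x * FreeMonoid.of y) * c := by
  obtain ⟨x, y, c, hc⟩ : ∃ x y c, (FreeMonoid.toList w).drop k = x :: y :: c := by
    match hd : (FreeMonoid.toList w).drop k with
    | x :: y :: c => exact ⟨x, y, c, rfl⟩
    | [] | [_] =>
      have := congrArg List.length hd
      simp [wlen] at this h
      omega
  refine ⟨FreeMonoid.ofList ((FreeMonoid.toList w).take k), FreeMonoid.ofList c, x, y, ?_, ?_⟩
  · simp only [wlen, FreeMonoid.toList_ofList, List.length_take]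
    exact min_eq_left (by unfold wlen at h; omega)
  · apply FreeMonoid.toList.injective
    conv_lhs => rw [← List.take_append_drop k (FreeMonoid.toList w), hc]
    simp

lemma mono_mul (u v : Word N) : mono (u * v) = mono u * mono v := by
  simp [mono, MonoidAlgebra.single_mul_single]

lemma X_mul_X (i j : Fin N) : X i * X j = mono (FreeMonoid.of i * FreeMonoid.of j) := by
  simp [X, mono, MonoidAlgebra.single_mul_single]

lemma mul_mul_mem_of_forall_mono {K : Submodule ℂ (T N)} {g : T N}
    (h : ∀ a c : Word N, mono a * g * mono c ∈ K) (A C : T N) : A * g * C ∈ K := by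
  induction A using MonoidAlgebra.induction_on with
  | of a =>
    induction C using MonoidAlgebra.induction_on with
    | of c => exact h a c
    | add C C' hC hC' =>
      rw [mul_add]
      exact add_mem hC hC'
    | smul r C hC =>
      rw [mul_smul_comm]
      exact K.smul_mem r hC
  | add A A' hA hA' =>
    rw [add_mul, add_mul]
    exact add_mem hA hA'
  | smul r A hA =>
    rw [smul_mul_assoc, smul_mul_assoc]
    exact K.smul_mem r hA

end Monomials

section Sigma

lemma sigma_mono (k : ℕ) (w : Word N) : sigma b p k (mono w) = sigmaWord b p k w := by
  simp [sigma, liftWord, mono]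

lemma sigmaWord_of_wlen_lt {k : ℕ} {w : Word N} (h : wlen w < k + 2) :
    sigmaWord b p k w = mono w :=
  dif_neg (by unfold wlen at h; omega)

lemma sigmaWord_mul_mul (a c : Word N) (x y : Fin N) :
    sigmaWord b p (wlen a) (a * (FreeMonoid.of x * FreeMonoid.of y) * c)
      = mono a * Sact b p x y * mono c := by
  simp [sigmaWord, wlen, List.getElem_append_right]

lemma relGen_eq_sub_Sact {i j : Fin N} (h : j < i) :
    relGen b p i j = X i * X j - Sact b p i j := by
  rw [Sact, if_pos h, relGen, sub_sub]

end Sigma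

section Degree

lemma mono_mem_Tdeg (w : Word N) : mono w ∈ Tdeg N (wlen w) :=
  Submodule.subset_span ⟨w, rfl, rfl⟩

lemma mul_mem_Tdeg {r s : ℕ} {u v : T N} (hu : u ∈ Tdeg N r) (hv : v ∈ Tdeg N s) :
    u * v ∈ Tdeg N (r + s) := by
  have huv := Submodule.mul_mem_mul hu hv
  rw [Tdeg, Tdeg, Submodule.span_mul_span] at huv
  refine Submodule.span_le.mpr ?_ huv
  rintro _ ⟨_, ⟨w, rfl, rfl⟩, _, ⟨w', rfl, rfl⟩, rfl⟩
  change mono w * mono w' ∈ Tdeg N (wlen w + wlen w')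
  rw [← mono_mul, ← wlen_mul]
  exact mono_mem_Tdeg _

lemma X_mul_X_mem_Tdeg_two (i j : Fin N) : X i * X j ∈ Tdeg N 2 := by
  rw [X_mul_X]
  simpa only [wlen_mul, wlen_of] using mono_mem_Tdeg (FreeMonoid.of i * FreeMonoid.of j)

lemma p_mem_Tdeg_two (hp : GoodP p) {i j : Fin N} (h : j < i) : p i j ∈ Tdeg N 2 := by
  refine Submodule.span_le.mpr ?_ (hp i j h)
  rintro _ ⟨k, l, -, -, rfl⟩
  exact X_mul_X_mem_Tdeg_two k l

lemma Sact_mem_Tdeg_two (hp : GoodP p) (x y : Fin N) : Sact b p x y ∈ Tdeg N 2 := by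
  unfold Sact
  split_ifs with hyx hxy
  · exact add_mem (Submodule.smul_mem _ _ (X_mul_X_mem_Tdeg_two y x)) (p_mem_Tdeg_two p hp hyx)
  · exact Submodule.smul_mem _ _ (sub_mem (X_mul_X_mem_Tdeg_two y x) (p_mem_Tdeg_two p hp hxy))
  · exact X_mul_X_mem_Tdeg_two x y

lemma sigma_mem_Tdeg (hp : GoodP p) (k : ℕ) {n : ℕ} {u : T N} (hu : u ∈ Tdeg N n) :
    sigma b p k u ∈ Tdeg N n := by
  refine (Submodule.span_le (p := (Tdeg N n).comap (sigma b p k))).mpr ?_ hu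
  rintro _ ⟨w, rfl, rfl⟩
  rw [SetLike.mem_coe, Submodule.mem_comap, sigma_mono]
  by_cases h : k + 2 ≤ wlen w
  · obtain ⟨a, c, x, y, rfl, rfl⟩ := exists_eq_mul_of_add_two_le_wlen h
    rw [sigmaWord_mul_mul, wlen_mul, wlen_mul, wlen_mul, wlen_of, wlen_of]
    exact mul_mem_Tdeg (mul_mem_Tdeg (mono_mem_Tdeg a) (Sact_mem_Tdeg_two b p hp x y))
      (mono_mem_Tdeg c)
  · rw [sigmaWord_of_wlen_lt b p (by omega)]
    exact mono_mem_Tdeg w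

lemma Phat_mem_Tdeg (hp : GoodP p) {n m : ℕ} (D : DecompChoice n) (σ : Equiv.Perm (Fin n))
    {u : T N} (hu : u ∈ Tdeg N m) : Phat b p D σ u ∈ Tdeg N m :=
  List.prod_induction (fun f : Module.End ℂ (T N) => ∀ u ∈ Tdeg N m, f u ∈ Tdeg N m)
    (fun _ _ hf hg u hu => hf _ (hg u hu)) (fun _ hu => hu)
    (List.forall_mem_map.mpr fun k _ _ => sigma_mem_Tdeg b p hp k.1) u hu

lemma POp_mem_Tdeg (hp : GoodP p) {n m : ℕ} (D : DecompChoice n) {u : T N}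
    (hu : u ∈ Tdeg N m) : POp b p D u ∈ Tdeg N m := by
  rw [POp, LinearMap.smul_apply, LinearMap.sum_apply]
  exact Submodule.smul_mem _ _ (Submodule.sum_mem _ fun σ _ => Phat_mem_Tdeg b p hp D σ hu)

end Degree

section Congruence

lemma mul_sub_Sact_mul_mem_IR (hb : GoodB b) (x y : Fin N) (A C : T N) :
    A * (X x * X y - Sact b p x y) * C ∈ IR b p := by
  have hgen : ∀ {i j : Fin N}, j < i → A * relGen b p i j * C ∈ IR b p := fun h =>
    Submodule.subset_span ⟨_, _, A, C, h, rfl⟩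
  rcases lt_trichotomy y x with hyx | rfl | hxy
  · rw [← relGen_eq_sub_Sact b p hyx]
    exact hgen hyx
  · simp [Sact]
  · have : X x * X y - Sact b p x y = (-(b y x)⁻¹) • relGen b p y x := by
      have hbyx := hb y x hxy
      rw [Sact, if_neg (asymm hxy), if_pos hxy, relGen]
      match_scalars <;> field_simp
    rw [this, mul_smul_comm, smul_mul_assoc]
    exact Submodule.smul_mem _ _ (hgen hxy)

lemma sigma_mem_idModSubmonoid (hb : GoodB b) (k : ℕ) :
    sigma b p k ∈ idModSubmonoid (IR b p) := by
  intro v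
  induction v using MonoidAlgebra.induction_on with
  | of w =>
    change mono w - sigma b p k (mono w) ∈ IR b p
    rw [sigma_mono]
    by_cases h : k + 2 ≤ wlen w
    · obtain ⟨a, c, x, y, rfl, rfl⟩ := exists_eq_mul_of_add_two_le_wlen h
      rw [sigmaWord_mul_mul, mono_mul, mono_mul, ← X_mul_X, ← sub_mul, ← mul_sub]
      exact mul_sub_Sact_mul_mem_IR b p hb x y _ _
    · rw [sigmaWord_of_wlen_lt b p (by omega), sub_self]
      exact zero_mem _
  | add f g hf hg =>
    rw [map_add, add_sub_add_comm]
    exact add_mem hf hg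
  | smul r f hf =>
    rw [map_smul, ← smul_sub]
    exact Submodule.smul_mem _ _ hf

lemma POp_mem_idModSubmonoid (hb : GoodB b) {n : ℕ} (D : DecompChoice n) :
    POp b p D ∈ idModSubmonoid (IR b p) := by
  have hPhat (σ : Equiv.Perm (Fin n)) : Phat b p D σ ∈ idModSubmonoid (IR b p) :=
    Submonoid.list_prod_mem _
      (List.forall_mem_map.mpr fun k _ => sigma_mem_idModSubmonoid b p hb k.1)
  have := inv_card_smul_sum_mem_idModSubmonoid hPhat
  rwa [Fintype.card_perm, Fintype.card_fin] at this

end Congruence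

section Limit

lemma exists_validDecomp (n : ℕ) : ∃ D : DecompChoice n, ValidDecomp D := by
  have hgen : ∀ σ : Equiv.Perm (Fin n), σ ∈ Submonoid.closure (Set.range (swapAdj n)) := by
    intro σ
    cases n with
    | zero => simp [Subsingleton.elim σ 1]
    | succ m =>
      refine Submonoid.closure_mono ?_ (by rw [Equiv.Perm.mclosure_swap_castSucc_succ]; trivial)
      rintro _ ⟨i, rfl⟩
      exact ⟨⟨i.1, by omega⟩, rfl⟩
  choose w hw using fun σ => (FreeMonoid.mrange_lift (swapAdj n)).symm ▸ hgen σ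
  exact ⟨fun σ => FreeMonoid.toList (w σ),
    fun σ => (FreeMonoid.lift_apply _ _).symm.trans (hw σ)⟩

lemma ValidDecomp.append_swapAdj {n : ℕ} {D : DecompChoice n} (hD : ValidDecomp D)
    (k : {k : ℕ // k + 2 ≤ n}) : ValidDecomp (fun σ => D (σ * swapAdj n k) ++ [k]) := by
  intro σ
  rw [List.map_append, List.prod_append, hD]
  simp [swapAdj, mul_assoc]

lemma POp_append_swapAdj {n : ℕ} (D : DecompChoice n) (k : {k : ℕ // k + 2 ≤ n}) :
    POp b p (fun σ => D (σ * swapAdj n k) ++ [k]) = POp b p D * sigma b p k.1 := by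
  unfold POp
  rw [smul_mul_assoc, Finset.sum_mul]
  congr 1
  refine Fintype.sum_equiv (Equiv.mulRight (swapAdj n k)) _ _ fun σ => ?_
  simp [Phat]

variable {b p}

lemma IsPqsym.apply_POp (hp : GoodP p) {Q : T N →ₗ[ℂ] T N} (hQ : IsPqsym b p Q) {n : ℕ}
    {D : DecompChoice n} (hD : ValidDecomp D) {u : T N} (hu : u ∈ Tdeg N n) :
    Q (POp b p D u) = Q u := by
  obtain ⟨M₀, hM₀⟩ := hQ n D hD u hu
  obtain ⟨M₁, hM₁⟩ := hQ n D hD _ (POp_mem_Tdeg b p hp D hu)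
  rw [← hM₁ (max M₀ M₁) (le_max_right _ _), ← Module.End.mul_apply, ← pow_succ,
    hM₀ _ (by omega)]

lemma IsPqsym.apply_sigma (hp : GoodP p) {Q : T N →ₗ[ℂ] T N} (hQ : IsPqsym b p Q) {n : ℕ}
    (k : {k : ℕ // k + 2 ≤ n}) {u : T N} (hu : u ∈ Tdeg N n) :
    Q (sigma b p k.1 u) = Q u := by
  obtain ⟨D, hD⟩ := exists_validDecomp n
  have hP : POp b p D (sigma b p k.1 u) = POp b p (fun σ => D (σ * swapAdj n k) ++ [k]) u := by
    rw [POp_append_swapAdj, Module.End.mul_apply]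
  rw [← hQ.apply_POp hp hD (sigma_mem_Tdeg b p hp k.1 hu), hP,
    hQ.apply_POp hp (hD.append_swapAdj k) hu]

lemma IsPqsym.apply_mono_mul_relGen_mul_mono (hp : GoodP p) {Q : T N →ₗ[ℂ] T N}
    (hQ : IsPqsym b p Q) {i j : Fin N} (h : j < i) (a c : Word N) :
    Q (mono a * relGen b p i j * mono c) = 0 := by
  have hw := mono_mem_Tdeg (a * (FreeMonoid.of i * FreeMonoid.of j) * c)
  have hk : wlen a + 2 ≤ wlen (a * (FreeMonoid.of i * FreeMonoid.of j) * c) := by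
    simp only [wlen_mul, wlen_of]
    omega
  rw [relGen_eq_sub_Sact b p h, mul_sub, sub_mul, ← sigmaWord_mul_mul, ← sigma_mono, X_mul_X,
    ← mono_mul, ← mono_mul, map_sub, hQ.apply_sigma hp ⟨_, hk⟩ hw, sub_self]

lemma IsPqsym.IR_le_ker (hp : GoodP p) {Q : T N →ₗ[ℂ] T N} (hQ : IsPqsym b p Q) :
    IR b p ≤ LinearMap.ker Q :=
  Submodule.span_le.mpr <| by
    rintro _ ⟨i, j, A, C, h, rfl⟩
    exact mul_mul_mem_of_forall_mono (hQ.apply_mono_mul_relGen_mul_mono hp h) A C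

end Limit

theorem statement15_general {N : ℕ} (b : Fin N → Fin N → ℂ) (p : Fin N → Fin N → T N)
    (hb : GoodB b) (hp : GoodP p) :
    (∀ (n : ℕ) (D : DecompChoice n), ValidDecomp D →
      ∀ u ∈ Tdeg N n, POp b p D u = 0 → u ∈ IR b p) ∧
    (∀ Q : T N →ₗ[ℂ] T N, IsPqsym b p Q →
      ∀ (n : ℕ), ∀ u ∈ Tdeg N n, (Q u = 0 ↔ u ∈ IR b p)) := by
  refine ⟨fun n D _ u _ hPu => ?_,
    fun Q hQ n u hu => ⟨fun hQu => ?_, fun hIR => hQ.IR_le_ker hp hIR⟩⟩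
  · simpa [hPu] using POp_mem_idModSubmonoid b p hb D u
  · obtain ⟨D, hD⟩ := exists_validDecomp n
    obtain ⟨M, hM⟩ := hQ n D hD u hu
    simpa [hM M le_rfl, hQu] using pow_mem (POp_mem_idModSubmonoid b p hb D) M u

/-- under (EA), if `u ∈ T^n` and `P(u) = 0` then `u ∈ I_R`; likewise if
`𝒫_qsym(u) = 0` then `u ∈ I_R`; combined with `𝒫_qsym(I_R) = 0`, the kernel of `𝒫_qsym`
restricted to `T^n` is exactly `I_R ∩ T^n`. -/
theorem statement15 {N : ℕ} (b : Fin N → Fin N → ℂ) (p : Fin N → Fin N → T N)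
    (hb : GoodB b) (hp : GoodP p) (hEA : EA b p) :
    (∀ (n : ℕ) (D : DecompChoice n), ValidDecomp D →
      ∀ u ∈ Tdeg N n, POp b p D u = 0 → u ∈ IR b p) ∧
    (∀ Q : T N →ₗ[ℂ] T N, IsPqsym b p Q →
      ∀ (n : ℕ), ∀ u ∈ Tdeg N n, (Q u = 0 ↔ u ∈ IR b p)) :=
  statement15_general b p hb hp

end QDiff
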